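/- arXiv:1401.8052 — 6 statements merged into one kernel-verified Lean document; each statement's English description precedes it below -/
import Mathlib

section
/- Let (c_j) be completely monotone with moment representation c_j = ∫_0^1 t^j dμ(t), and let 0 < p < 2. Then the sequence b_k = ∑_{j=k}^∞ c_j · binom(j,k) · (1−p)^{j−k} p^k is completely monotone. -/
/-!
Summing the binomial series in `j` under the integral gives
`b k = ∫ (t p)^k / (1 - t (1 - p))^(k+1) dμ(t) = ∫ s(t)^k w(t) dμ(t)` with
`s(t) = t p / (1 - t (1 - p))` and `w(t) = 1 / (1 - t (1 - p))`. For `t ∈ [0, 1]` and `0 < p < 2`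
we have `s(t) ∈ [0, 1]` and `w(t) > 0`, so `b` is again a moment sequence of a positive measure on
`[0, 1]`; its iterated differences are `∫ (1 - s)^k s^m w ≥ 0`.
-/

def CompletelyMonotone (c : ℕ → ℝ) : Prop :=
  ∀ j k : ℕ, 0 ≤ ∑ n ∈ Finset.range (k + 1), (-1 : ℝ) ^ n * (k.choose n) * c (n + j)

open MeasureTheory Set

theorem sum_range_neg_one_pow_mul_choose_mul_pow {R : Type*} [CommRing R] (s : R) (k : ℕ) :
    ∑ n ∈ Finset.range (k + 1), (-1 : R) ^ n * k.choose n * s ^ n = (1 - s) ^ k := by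
  rw [sub_eq_neg_add, add_pow]
  refine Finset.sum_congr rfl fun n _ => ?_
  rw [one_pow, mul_one, neg_pow]
  ring

theorem completelyMonotone_integral_pow_mul {α : Type*} [MeasurableSpace α] {ν : Measure α}
    {s w : α → ℝ} (hs : ∀ᵐ x ∂ν, s x ∈ Icc 0 1) (hw : ∀ᵐ x ∂ν, 0 ≤ w x)
    (hint : ∀ j, Integrable (fun x => s x ^ j * w x) ν) :
    CompletelyMonotone fun j => ∫ x, s x ^ j * w x ∂ν := by
  intro m k
  have hsum : ∀ x, ∑ n ∈ Finset.range (k + 1),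
      (-1 : ℝ) ^ n * k.choose n * (s x ^ (n + m) * w x) = (1 - s x) ^ k * s x ^ m * w x := by
    intro x
    rw [← sum_range_neg_one_pow_mul_choose_mul_pow, Finset.sum_mul, Finset.sum_mul]
    refine Finset.sum_congr rfl fun n _ => ?_
    ring
  simp_rw [← integral_const_mul]
  rw [← integral_finsetSum _ fun n _ => (hint (n + m)).const_mul _]
  simp_rw [hsum]
  refine integral_nonneg_of_ae ?_
  filter_upwards [hs, hw] with x ⟨hs0, hs1⟩ hwx
  have : 0 ≤ 1 - s x := sub_nonneg.2 hs1
  positivity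

theorem hasSum_pow_mul_choose_mul_pow_sub {𝕜 : Type*} [NormedField 𝕜] [CompleteSpace 𝕜]
    {t q : 𝕜} (htq : ‖t * q‖ < 1) (p : 𝕜) (k : ℕ) :
    HasSum (fun j : ℕ => t ^ j * j.choose k * q ^ (j - k) * p ^ k)
      ((t * p) ^ k / (1 - t * q) ^ (k + 1)) := by
  rw [← hasSum_nat_add_iff' k]
  have hlow : ∑ j ∈ Finset.range k, t ^ j * j.choose k * q ^ (j - k) * p ^ k = 0 :=
    Finset.sum_eq_zero fun j hj => by
      rw [Nat.choose_eq_zero_of_lt (Finset.mem_range.1 hj)]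
      simp
  rw [hlow, sub_zero]
  have h := (hasSum_choose_mul_geometric_of_norm_lt_one k htq).mul_left ((t * p) ^ k)
  rw [mul_one_div] at h
  refine h.congr_fun fun n => ?_
  rw [Nat.add_sub_cancel, pow_add, mul_pow, mul_pow]
  ring

theorem hasSum_moment_mul_choose_mul_pow {ν : Measure ℝ} [IsFiniteMeasure ν]
    (hν : ∀ᵐ t ∂ν, |t| ≤ 1) {q : ℝ} (hq : |q| < 1) (p : ℝ) (k : ℕ) :
    HasSum (fun j : ℕ => (∫ t, t ^ j ∂ν) * j.choose k * q ^ (j - k) * p ^ k)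
      (∫ t, (t * p) ^ k / (1 - t * q) ^ (k + 1) ∂ν) := by
  have htq : ∀ {t : ℝ}, |t| ≤ 1 → |t * q| < 1 := fun ht => by
    rw [abs_mul]
    exact mul_lt_one_of_nonneg_of_lt_one_right ht (abs_nonneg q) hq
  have hbound := hasSum_pow_mul_choose_mul_pow_sub (t := 1) (q := |q|)
    (by simpa using hq) |p| k
  simp_rw [← integral_mul_const]
  refine hasSum_integral_of_dominated_convergence
    (fun j _ => 1 ^ j * j.choose k * |q| ^ (j - k) * |p| ^ k) (fun j => by fun_prop) (fun j => ?_)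
    (ae_of_all _ fun _ => hbound.summable) (integrable_const _) ?_
  · filter_upwards [hν] with t ht
    simp only [norm_mul, norm_pow, Real.norm_eq_abs, Nat.abs_cast]
    gcongr
  · filter_upwards [hν] with t ht
    exact hasSum_pow_mul_choose_mul_pow_sub (htq ht) p k

theorem one_sub_mul_one_sub_pos {t p : ℝ} (ht : t ∈ Icc (0 : ℝ) 1) (hp : 0 < p) :
    0 < 1 - t * (1 - p) := by
  nlinarith [ht.1, ht.2, mul_nonneg ht.1 hp.le]

theorem mul_div_one_sub_mul_one_sub_mem_Icc {t p : ℝ} (ht : t ∈ Icc (0 : ℝ) 1) (hp : 0 < p) :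
    t * p / (1 - t * (1 - p)) ∈ Icc (0 : ℝ) 1 :=
  have hD := one_sub_mul_one_sub_pos ht hp
  ⟨div_nonneg (mul_nonneg ht.1 hp.le) hD.le, (div_le_one hD).2 (by nlinarith [ht.2])⟩

theorem stmt_1_general (μ : MeasureTheory.Measure ℝ) [MeasureTheory.IsFiniteMeasure μ]
    (c : ℕ → ℝ)
    (hc : ∀ j, c j = ∫ t in Set.Icc (0:ℝ) 1, t ^ j ∂μ)
    (p : ℝ) (hp0 : 0 < p) (hp2 : p < 2) (b : ℕ → ℝ)
    (hb : ∀ k, b k = ∑' j : ℕ, c j * (j.choose k) * (1 - p) ^ (j - k) * p ^ k) :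
    CompletelyMonotone b := by
  set ν := μ.restrict (Icc (0 : ℝ) 1)
  have hmem : ∀ᵐ t ∂ν, t ∈ Icc (0 : ℝ) 1 := ae_restrict_mem measurableSet_Icc
  have hD : ∀ t ∈ Icc (0 : ℝ) 1, 0 < 1 - t * (1 - p) :=
    fun t ht => one_sub_mul_one_sub_pos ht hp0
  have hb_eq :
      b = fun k => ∫ t, (t * p / (1 - t * (1 - p))) ^ k * (1 - t * (1 - p))⁻¹ ∂ν := by
    funext k
    have hsum := hasSum_moment_mul_choose_mul_pow (q := 1 - p)
      (hmem.mono fun t ht => abs_le.2 ⟨by linarith [ht.1], ht.2⟩)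
      (abs_lt.2 ⟨by linarith, by linarith⟩) p k
    simp only [hb k, hc, hsum.tsum_eq]
    congr with t
    rw [div_pow, pow_succ, ← div_div, div_eq_mul_inv _ (1 - t * (1 - p))]
  rw [hb_eq]
  refine completelyMonotone_integral_pow_mul ?_ ?_ fun j => ?_
  · exact hmem.mono fun t ht => mul_div_one_sub_mul_one_sub_mem_Icc ht hp0
  · exact hmem.mono fun t ht => (inv_pos.2 (hD t ht)).le
  · have hDne : ∀ t ∈ Icc (0 : ℝ) 1, 1 - t * (1 - p) ≠ 0 := fun t ht => (hD t ht).ne'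
    have hcont : ContinuousOn (fun t : ℝ => 1 - t * (1 - p)) (Icc 0 1) := by fun_prop
    exact ((((continuousOn_id.mul continuousOn_const).div hcont hDne).pow j).mul
      (hcont.inv₀ hDne)).integrableOn_Icc

theorem stmt_1 (μ : MeasureTheory.Measure ℝ) [MeasureTheory.IsFiniteMeasure μ]
    (hsupp : μ (Set.Icc (0:ℝ) 1)ᶜ = 0) (c : ℕ → ℝ)
    (hc : ∀ j, c j = ∫ t in Set.Icc (0:ℝ) 1, t ^ j ∂μ)
    (p : ℝ) (hp0 : 0 < p) (hp2 : p < 2) (b : ℕ → ℝ)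
    (hb : ∀ k, b k = ∑' j : ℕ, c j * (j.choose k) * (1 - p) ^ (j - k) * p ^ k) :
    CompletelyMonotone b :=
  stmt_1_general μ c hc p hp0 hp2 b hb
end

section
/- The generating function B_p of the Fuss–Catalan numbers A_n(p,1) = (1/(pn−n+1)) binom(pn,n) satisfies the functional equation B_p(z) = 1 + z·B_p(z)^p as an identity of formal power series when p is a positive integer. -/
/-!
The series `F r = ∑ₙ R(p, r, n) zⁿ` of the Raney numbers `R(p, r, n) = r/(pn+r) · C(pn+r, n)`
satisfy `F 0 = 1`, `F 1 = B_p` and, by a binomial identity, `F (r+1) = F r + z · F (r+p)`.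
This recurrence determines a sequence of power series from its first term, and both
`r ↦ F (r+s)` and `r ↦ F r · F s` satisfy it, so `F (r+s) = F r · F s`, whence `F r = B_pʳ`.
The recurrence at `r = 0` is then `B_p = 1 + z · B_pᵖ`.
-/

/-- The Fuss-Catalan numbers `A_n(p,1)` as rationals. -/
noncomputable def fussCatalan (p n : ℕ) : ℚ :=
  (((p * n).choose n : ℚ)) / (p * n - n + 1)

open PowerSeries

theorem PowerSeries.eq_of_succ_eq_add_X_mul {R : Type*} [CommRing R] (p : ℕ) {F G : ℕ → R⟦X⟧}
    (hF : ∀ r, F (r + 1) = F r + X * F (r + p)) (hG : ∀ r, G (r + 1) = G r + X * G (r + p))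
    (h₀ : F 0 = G 0) : F = G := by
  suffices h : ∀ n r, X ^ n ∣ F r - G r by
    funext r
    rw [← sub_eq_zero]
    ext m
    simpa using X_pow_dvd_iff.mp (h (m + 1) r) m (lt_add_one m)
  intro n
  induction n with
  | zero => simp
  | succ n ih =>
    intro r
    induction r with
    | zero => simp [h₀]
    | succ r ihr =>
      have hX : X ^ (n + 1) ∣ X * (F (r + p) - G (r + p)) := by
        rw [pow_succ']
        exact mul_dvd_mul_left X (ih _)
      rw [hF, hG, show F r + X * F (r + p) - (G r + X * G (r + p))
        = (F r - G r) + X * (F (r + p) - G (r + p)) by ring]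
      exact dvd_add ihr hX

/-- The case split only matters at `r = 0`, where the closed formula would give `0 / 0 = 0`
instead of `R(p, 0, 0) = 1`. -/
noncomputable def raney (p r n : ℕ) : ℚ :=
  if n = 0 then 1 else r / (p * n + r) * (p * n + r).choose n

section Raney

variable {p : ℕ}

theorem raney_of_pos {r : ℕ} (hr : 0 < r) (n : ℕ) :
    raney p r n = r / (p * n + r) * (p * n + r).choose n := by
  rcases eq_or_ne n 0 with rfl | hn
  · have : (r : ℚ) ≠ 0 := by positivity
    simp [raney, this]
  · simp [raney, hn]

theorem raney_one (hp : 0 < p) : raney p 1 = fussCatalan p := by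
  funext n
  have hchoose := Nat.choose_mul_succ_eq (p * n) n
  have hn : n ≤ p * n + 1 := by nlinarith
  have hd : (p : ℚ) * n - n + 1 ≠ 0 := by
    have : (n : ℚ) ≤ p * n := by exact_mod_cast Nat.le_mul_of_pos_left n hp
    linarith
  rw [raney_of_pos one_pos, fussCatalan]
  qify [hn] at hchoose
  rw [eq_div_iff hd]
  field_simp
  linear_combination -hchoose

theorem raney_succ_succ (hp : 0 < p) (r n : ℕ) :
    raney p (r + 1) (n + 1) = raney p r (n + 1) + raney p (r + p) n := by
  set N := p * (n + 1) + r with hN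
  have hnN : n ≤ N := by nlinarith
  have hc : ((N + 1).choose (n + 1) : ℚ) = (N + 1) * N.choose n / (n + 1) := by
    rw [eq_div_iff (by positivity)]
    exact_mod_cast (Nat.add_one_mul_choose_eq N n).symm
  have hb : (N.choose (n + 1) : ℚ) = N.choose n * (N - n) / (n + 1) := by
    rw [eq_div_iff (by positivity)]
    exact_mod_cast Nat.choose_succ_right_eq N n
  have hNq : (N : ℚ) = p * (n + 1) + r := by push_cast [hN]; ring
  rw [raney_of_pos r.succ_pos, raney_of_pos (by omega : 0 < r + p), raney,
    if_neg n.succ_ne_zero, show p * (n + 1) + (r + 1) = N + 1 by omega,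
    show p * n + (r + p) = N by rw [hN]; ring, hc, hb]
  push_cast
  field_simp
  rw [hNq]
  ring

theorem mk_raney_zero (p : ℕ) : mk (raney p 0) = 1 := by
  ext n
  rcases eq_or_ne n 0 with rfl | hn <;> simp [raney, coeff_one, *]

theorem mk_raney_succ (hp : 0 < p) (r : ℕ) :
    mk (raney p (r + 1)) = mk (raney p r) + X * mk (raney p (r + p)) := by
  ext n
  rcases n with _ | n
  · simp [raney]
  · simp only [map_add, coeff_mk, coeff_succ_X_mul, raney_succ_succ hp]

theorem mk_raney_add (hp : 0 < p) (r s : ℕ) :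
    mk (raney p (r + s)) = mk (raney p r) * mk (raney p s) := by
  have h := eq_of_succ_eq_add_X_mul p (F := fun r => mk (raney p (r + s)))
    (G := fun r => mk (raney p r) * mk (raney p s))
    (fun r => by simpa only [Nat.add_right_comm] using mk_raney_succ hp (r + s))
    (fun r => by simp only [mk_raney_succ hp]; ring) (by simp [mk_raney_zero])
  exact congrFun h r

theorem mk_raney_eq_pow (hp : 0 < p) (r : ℕ) : mk (raney p r) = mk (raney p 1) ^ r := by
  induction r with
  | zero => simp [mk_raney_zero]
  | succ r ih => rw [mk_raney_add hp, ih, pow_succ]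

end Raney

theorem stmt_7 (p : ℕ) (hp : 1 ≤ p) :
    PowerSeries.mk (fun n => fussCatalan p n) =
      1 + PowerSeries.X * (PowerSeries.mk (fun n => fussCatalan p n)) ^ p := by
  have h := mk_raney_succ hp 0
  rwa [zero_add, zero_add, mk_raney_zero, mk_raney_eq_pow hp p, raney_one hp] at h
end

section
/- The Catalan numbers C_n = (1/(n+1)) binom(2n,n) are the moments of the Marchenko–Pastur distribution: C_n = (1/(2π)) ∫_0^4 t^n √((4−t)/t) dt for all n ≥ 0. -/
/-!
The substitution `t = 4 sin² θ` maps `(0, π/2)` onto `(0, 4)`, with `dt = 8 sin θ cos θ dθ` and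
`√((4 - t) / t) = cos θ / sin θ`, so the `n`-th moment becomes `8 · 4ⁿ ∫₀^{π/2} sin²ⁿ θ cos² θ dθ`.
Since `cos² = 1 - sin²`, Wallis' reduction formula turns this into `8 · 4ⁿ / (2n + 2)` times the
Wallis integral `∫₀^{π/2} sin²ⁿ = (π/2) binom(2n, n) / 4ⁿ`, which is `2π C_n`.
-/

open Real Set MeasureTheory

theorem integral_sin_pow_two_mul_zero_pi_div_two (n : ℕ) :
    ∫ x in (0 : ℝ)..π / 2, sin x ^ (2 * n) = π / 2 * n.centralBinom / 4 ^ n := by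
  induction n with
  | zero => simp
  | succ k ih =>
    have hrec : ((k : ℝ) + 1) * (k + 1).centralBinom = 2 * (2 * k + 1) * k.centralBinom := by
      exact_mod_cast Nat.succ_mul_centralBinom_succ k
    rw [Nat.mul_succ, integral_sin_pow, ih]
    simp only [sin_zero, cos_pi_div_two, zero_pow (Nat.succ_ne_zero _), mul_zero]
    field_simp
    push_cast
    linear_combination (-2 * π * 4 ^ k) * hrec

theorem integral_sin_pow_two_mul_mul_cos_sq_zero_pi_div_two (n : ℕ) :
    ∫ x in (0 : ℝ)..π / 2, sin x ^ (2 * n) * cos x ^ 2 = π * catalan n / 4 ^ (n + 1) := by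
  have hsplit : ∀ x : ℝ, sin x ^ (2 * n) * cos x ^ 2 = sin x ^ (2 * n) - sin x ^ (2 * n + 2) :=
    fun x => by rw [cos_sq', pow_add]; ring
  have hcat : ((n : ℝ) + 1) * catalan n = n.centralBinom := by
    exact_mod_cast succ_mul_catalan_eq_centralBinom n
  simp only [hsplit]
  rw [intervalIntegral.integral_sub (Continuous.intervalIntegrable (by fun_prop) _ _)
    (Continuous.intervalIntegrable (by fun_prop) _ _), integral_sin_pow,
    integral_sin_pow_two_mul_zero_pi_div_two]
  simp only [sin_zero, cos_pi_div_two, zero_pow (Nat.succ_ne_zero _), mul_zero]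
  rw [← hcat]
  field_simp
  push_cast
  ring

theorem setIntegral_Ioo_zero_eq_sin_sq_substitution {E : Type*} [NormedAddCommGroup E]
    [NormedSpace ℝ E] {a : ℝ} (ha : 0 < a) (g : ℝ → E) :
    ∫ t in Ioo 0 a, g t = ∫ θ in Ioo 0 (π / 2), (2 * a * sin θ * cos θ) • g (a * sin θ ^ 2) := by
  set f : ℝ → ℝ := fun θ => a * sin θ ^ 2
  have hmono : StrictMonoOn f (Icc 0 (π / 2)) := by
    intro x hx y hy hxy
    have hsin : sin x < sin y :=
      sin_lt_sin_of_lt_of_le_pi_div_two (by linarith [pi_pos, hx.1]) hy.2 hxy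
    have hsin_nonneg : 0 ≤ sin x := sin_nonneg_of_nonneg_of_le_pi hx.1 (by linarith [hx.2, pi_pos])
    exact mul_lt_mul_of_pos_left (pow_lt_pow_left₀ hsin hsin_nonneg two_ne_zero) ha
  have himage : f '' Ioo 0 (π / 2) = Ioo 0 a := by
    apply Subset.antisymm
    · simpa [f] using hmono.image_Ioo_subset
    · simpa [f] using intermediate_value_Ioo (by positivity : (0 : ℝ) ≤ π / 2)
        (by fun_prop : ContinuousOn f (Icc 0 (π / 2)))
  have hderiv : ∀ θ, HasDerivAt f (2 * a * sin θ * cos θ) θ := fun θ =>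
    (((hasDerivAt_sin θ).pow 2).const_mul a).congr_deriv (by ring)
  rw [← himage, integral_image_eq_integral_abs_deriv_smul measurableSet_Ioo
    (fun θ _ => (hderiv θ).hasDerivWithinAt) (hmono.injOn.mono Ioo_subset_Icc_self)]
  refine setIntegral_congr_fun measurableSet_Ioo fun θ hθ => ?_
  have hsin : 0 < sin θ := sin_pos_of_pos_of_lt_pi hθ.1 (by linarith [hθ.2, pi_pos])
  have hcos : 0 < cos θ := cos_pos_of_mem_Ioo ⟨by linarith [hθ.1, pi_pos], hθ.2⟩
  rw [abs_of_pos (by positivity)]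

theorem sqrt_sub_mul_sin_sq_div_mul_sin_sq {a θ : ℝ} (ha : a ≠ 0) (hsin : 0 < sin θ)
    (hcos : 0 ≤ cos θ) : √((a - a * sin θ ^ 2) / (a * sin θ ^ 2)) = cos θ / sin θ := by
  rw [← sqrt_sq (div_nonneg hcos hsin.le), div_pow, cos_sq']
  congr 1
  field_simp

theorem stmt_11 (n : ℕ) :
    (catalan n : ℝ) =
      (1 / (2 * Real.pi)) * ∫ t in Set.Ioo (0:ℝ) 4, t ^ n * Real.sqrt ((4 - t) / t) := by
  have hintegrand : ∀ θ ∈ Ioo 0 (π / 2),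
      (2 * 4 * sin θ * cos θ) • ((4 * sin θ ^ 2) ^ n * √((4 - 4 * sin θ ^ 2) / (4 * sin θ ^ 2)))
        = 8 * 4 ^ n * (sin θ ^ (2 * n) * cos θ ^ 2) := fun θ hθ => by
    have hsin : 0 < sin θ := sin_pos_of_pos_of_lt_pi hθ.1 (by linarith [hθ.2, pi_pos])
    have hcos : 0 < cos θ := cos_pos_of_mem_Ioo ⟨by linarith [hθ.1, pi_pos], hθ.2⟩
    rw [sqrt_sub_mul_sin_sq_div_mul_sin_sq four_ne_zero hsin hcos.le, smul_eq_mul, mul_pow,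
      ← pow_mul]
    field_simp
    norm_num
  rw [setIntegral_Ioo_zero_eq_sin_sq_substitution four_pos,
    setIntegral_congr_fun measurableSet_Ioo hintegrand, ← integral_Ioc_eq_integral_Ioo,
    ← intervalIntegral.integral_of_le (by positivity), intervalIntegral.integral_const_mul,
    integral_sin_pow_two_mul_mul_cos_sq_zero_pi_div_two]
  field_simp
  ring
end

section
/- The sequence (binom(2n,n))_{n≥0} is the moment sequence of a probability measure on [0,4] with distribution function 1 − (2/π) arccos(√(t/4)); i.e. binom(2n,n) = ∫_0^4 t^n dμ(t) where μ has density d/dt (1 − (2/π) arccos(√(t/4))). -/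
/-!
Substituting `t = 4 sin² θ`, `θ ∈ (0, π/2)`, the Jacobian `8 sin θ cos θ` cancels the density
exactly, leaving the constant `2/π`. The `n`-th moment thus becomes `(2/π) 4ⁿ ∫₀^{π/2} sin^{2n} θ dθ`,
and Wallis' reduction formula evaluates this to `binom(2n, n)`.
-/

open Real MeasureTheory Set

noncomputable def arcsineDensity (t : ℝ) : ℝ := 1 / (π * √(t * (4 - t)))

theorem integral_sin_pow_even_pi_div_two (n : ℕ) :
    ∫ x in (0:ℝ)..π / 2, sin x ^ (2 * n) = π / 2 * (n.centralBinom / 4 ^ n) := by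
  induction n with
  | zero => simp
  | succ n ih =>
    have hrec : ((n : ℝ) + 1) * (n + 1).centralBinom = 2 * (2 * n + 1) * n.centralBinom := by
      exact_mod_cast Nat.succ_mul_centralBinom_succ n
    rw [show 2 * (n + 1) = 2 * n + 2 by ring, integral_sin_pow, sin_zero, cos_pi_div_two, ih]
    push_cast
    field_simp
    linear_combination (-2 * π * 4 ^ n) * hrec

theorem strictMonoOn_four_mul_sin_sq : StrictMonoOn (fun θ => 4 * sin θ ^ 2) (Icc 0 (π / 2)) := by
  intro a ha b hb hab
  have hsin : sin a < sin b :=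
    strictMonoOn_sin ⟨by linarith [ha.1, pi_pos], ha.2⟩ ⟨by linarith [hb.1, pi_pos], hb.2⟩ hab
  have hsa : 0 ≤ sin a := sin_nonneg_of_nonneg_of_le_pi ha.1 (by linarith [ha.2, pi_pos])
  have : sin a ^ 2 < sin b ^ 2 := pow_lt_pow_left₀ hsin hsa two_ne_zero
  dsimp only
  linarith

theorem image_four_mul_sin_sq_Ioo : (fun θ => 4 * sin θ ^ 2) '' Ioo 0 (π / 2) = Ioo 0 4 := by
  have h := (continuous_const.mul (continuous_sin.pow 2)).continuousOn.image_Ioo_of_strictMonoOn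
    (by positivity) strictMonoOn_four_mul_sin_sq
  simpa using h

theorem setIntegral_Ioo_zero_four_eq (g : ℝ → ℝ) :
    ∫ t in Ioo 0 4, g t = ∫ θ in Ioo 0 (π / 2), 8 * sin θ * cos θ * g (4 * sin θ ^ 2) := by
  have hderiv : ∀ θ ∈ Ioo 0 (π / 2), HasDerivWithinAt (fun θ => 4 * sin θ ^ 2)
      (8 * sin θ * cos θ) (Ioo 0 (π / 2)) θ := fun θ _ =>
    (((hasDerivAt_sin θ).pow 2).const_mul 4).hasDerivWithinAt.congr_deriv (by push_cast; ring)
  rw [← image_four_mul_sin_sq_Ioo, integral_image_eq_integral_abs_deriv_smul measurableSet_Ioo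
    hderiv (strictMonoOn_four_mul_sin_sq.injOn.mono Ioo_subset_Icc_self)]
  refine setIntegral_congr_fun measurableSet_Ioo fun θ hθ => ?_
  have hs : 0 < sin θ := sin_pos_of_pos_of_lt_pi hθ.1 (by linarith [hθ.2, pi_pos])
  have hc : 0 < cos θ := cos_pos_of_mem_Ioo ⟨by linarith [hθ.1, pi_pos], hθ.2⟩
  rw [smul_eq_mul, abs_of_pos (by positivity)]

theorem mul_arcsineDensity_four_mul_sin_sq {θ : ℝ} (hθ : θ ∈ Ioo 0 (π / 2)) :
    8 * sin θ * cos θ * arcsineDensity (4 * sin θ ^ 2) = 2 / π := by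
  have hs : 0 < sin θ := sin_pos_of_pos_of_lt_pi hθ.1 (by linarith [hθ.2, pi_pos])
  have hc : 0 < cos θ := cos_pos_of_mem_Ioo ⟨by linarith [hθ.1, pi_pos], hθ.2⟩
  have hsqrt : √(4 * sin θ ^ 2 * (4 - 4 * sin θ ^ 2)) = 4 * sin θ * cos θ := by
    rw [← sqrt_sq (by positivity : 0 ≤ 4 * sin θ * cos θ)]
    congr 1
    linear_combination -16 * sin θ ^ 2 * sin_sq_add_cos_sq θ
  rw [arcsineDensity, hsqrt]
  field_simp
  ring

theorem setIntegral_pow_mul_arcsineDensity (n : ℕ) :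
    ∫ t in Ioo 0 4, t ^ n * arcsineDensity t = n.centralBinom := by
  have hmoment : ∀ θ ∈ Ioo 0 (π / 2),
      8 * sin θ * cos θ * ((4 * sin θ ^ 2) ^ n * arcsineDensity (4 * sin θ ^ 2))
        = 2 / π * 4 ^ n * sin θ ^ (2 * n) := fun θ hθ => by
    rw [mul_left_comm, mul_arcsineDensity_four_mul_sin_sq hθ, pow_mul]
    ring
  rw [setIntegral_Ioo_zero_four_eq, setIntegral_congr_fun measurableSet_Ioo hmoment,
    integral_const_mul, ← integral_Ioc_eq_integral_Ioo,
    ← intervalIntegral.integral_of_le (by positivity),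
    integral_sin_pow_even_pi_div_two]
  field_simp

theorem stmt_13 :
    (∫ t in Set.Ioo (0:ℝ) 4, 1 / (Real.pi * Real.sqrt (t * (4 - t)))) = 1 ∧
      ∀ n : ℕ, (((2 * n).choose n : ℕ) : ℝ) =
        ∫ t in Set.Ioo (0:ℝ) 4, t ^ n * (1 / (Real.pi * Real.sqrt (t * (4 - t)))) := by
  refine ⟨?_, fun n => (setIntegral_pow_mul_arcsineDensity n).symm⟩
  have hmass := setIntegral_pow_mul_arcsineDensity 0
  simp only [pow_zero, one_mul, Nat.centralBinom_zero, Nat.cast_one] at hmass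
  exact hmass
end

section
/- Let μ be a finite positive measure on [0,τ] with τ > 0 and F(x) = ∫_0^τ dμ(t)/(1−tx) for real x < 1/τ. Then μ({τ}) = lim_{x↑1/τ} (1−τx) F(x). -/
/-!
Write `(1 - τx) F(x) = ∫ (1 - τx)/(1 - tx) dμ(t)`. For `0 < x < 1/τ` and `0 ≤ t ≤ τ` the
integrand lies in `[0, 1]`, and as `x ↑ 1/τ` it tends to `1` at `t = τ` and to `0` elsewhere;
dominated convergence with the constant `1` gives the limit `μ {τ}`.
-/

open MeasureTheory Filter Set Topology

lemma mul_lt_one_of_lt_one_div {τ x : ℝ} (hτ : 0 < τ) (hx : x < 1 / τ) : τ * x < 1 := by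
  rwa [lt_div_iff₀ hτ, mul_comm] at hx

lemma abs_one_sub_mul_mul_inv_le_one {τ t x : ℝ} (hτ : 0 < τ) (ht : t ∈ Icc 0 τ)
    (hx : x ∈ Ioo 0 (1 / τ)) : |(1 - τ * x) * (1 - t * x)⁻¹| ≤ 1 := by
  have hτx := mul_lt_one_of_lt_one_div hτ hx.2
  have htx : t * x ≤ τ * x := mul_le_mul_of_nonneg_right ht.2 hx.1.le
  have hpos : 0 < 1 - t * x := by linarith
  rw [abs_of_nonneg (mul_nonneg (by linarith) (inv_nonneg.2 hpos.le)), ← div_eq_mul_inv,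
    div_le_one hpos]
  linarith

lemma tendsto_one_sub_mul_mul_inv_indicator {τ : ℝ} (hτ : 0 < τ) (t : ℝ) :
    Tendsto (fun x => (1 - τ * x) * (1 - t * x)⁻¹) (𝓝[<] (1 / τ))
      (𝓝 (({τ} : Set ℝ).indicator 1 t)) := by
  rcases eq_or_ne t τ with rfl | htτ
  · rw [indicator_of_mem (mem_singleton t), Pi.one_apply]
    refine tendsto_const_nhds.congr' ?_
    filter_upwards [self_mem_nhdsWithin] with x hx
    exact (mul_inv_cancel₀ (sub_ne_zero.2 (mul_lt_one_of_lt_one_div hτ hx).ne')).symm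
  · rw [indicator_of_notMem (mt mem_singleton_iff.1 htτ)]
    have hden : 1 - t * (1 / τ) ≠ 0 := by
      rw [sub_ne_zero, mul_one_div, ne_comm, Ne, div_eq_one_iff_eq hτ.ne']
      exact htτ
    have hnum : 1 - τ * (1 / τ) = 0 := by rw [mul_one_div_cancel hτ.ne', sub_self]
    have hlim : Tendsto (fun x => (1 - τ * x) * (1 - t * x)⁻¹) (𝓝 (1 / τ))
        (𝓝 ((1 - τ * (1 / τ)) * (1 - t * (1 / τ))⁻¹)) :=
      ((continuous_const.sub (continuous_const_mul τ)).tendsto _).mul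
        (((continuous_const.sub (continuous_const_mul t)).tendsto _).inv₀ hden)
    rw [hnum, zero_mul] at hlim
    exact hlim.mono_left nhdsWithin_le_nhds

theorem tendsto_integral_one_sub_mul_mul_inv {τ : ℝ} (hτ : 0 < τ) (ν : Measure ℝ)
    [IsFiniteMeasure ν] (hν : ∀ᵐ t ∂ν, t ∈ Icc 0 τ) :
    Tendsto (fun x => ∫ t, (1 - τ * x) * (1 - t * x)⁻¹ ∂ν) (𝓝[<] (1 / τ))
      (𝓝 (ν.real {τ})) := by
  rw [← integral_indicator_one (measurableSet_singleton τ)]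
  refine tendsto_integral_filter_of_dominated_convergence (fun _ => 1) ?_ ?_
    (integrable_const 1) (Eventually.of_forall (tendsto_one_sub_mul_mul_inv_indicator hτ))
  · exact Eventually.of_forall fun _ => Measurable.aestronglyMeasurable (by fun_prop)
  · filter_upwards [Ioo_mem_nhdsLT (one_div_pos.2 hτ)] with x hx
    filter_upwards [hν] with t ht
    exact abs_one_sub_mul_mul_inv_le_one hτ ht hx

theorem stmt_17_general (τ : ℝ) (hτ : 0 < τ) (μ : MeasureTheory.Measure ℝ)
    [MeasureTheory.IsFiniteMeasure μ] (F : ℝ → ℝ)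
    (hF : ∀ x, x < 1 / τ → F x = ∫ t in Set.Icc (0:ℝ) τ, (1 - t * x)⁻¹ ∂μ) :
    Filter.Tendsto (fun x => (1 - τ * x) * F x)
      (nhdsWithin (1 / τ) (Set.Iio (1 / τ))) (nhds ((μ {τ}).toReal)) := by
  have hatom : (μ.restrict (Icc 0 τ)).real {τ} = (μ {τ}).toReal := by
    rw [measureReal_def, Measure.restrict_apply (measurableSet_singleton τ),
      inter_eq_left.2 (singleton_subset_iff.2 (right_mem_Icc.2 hτ.le))]
  rw [← hatom]
  refine (tendsto_integral_one_sub_mul_mul_inv hτ _ (ae_restrict_mem measurableSet_Icc)).congr' ?_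
  filter_upwards [self_mem_nhdsWithin] with x hx
  rw [hF x hx, integral_const_mul]

theorem stmt_17 (τ : ℝ) (hτ : 0 < τ) (μ : MeasureTheory.Measure ℝ)
    [MeasureTheory.IsFiniteMeasure μ] (hsupp : μ (Set.Icc (0:ℝ) τ)ᶜ = 0) (F : ℝ → ℝ)
    (hF : ∀ x, x < 1 / τ → F x = ∫ t in Set.Icc (0:ℝ) τ, (1 - t * x)⁻¹ ∂μ) :
    Filter.Tendsto (fun x => (1 - τ * x) * F x)
      (nhdsWithin (1 / τ) (Set.Iio (1 / τ))) (nhds ((μ {τ}).toReal)) :=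
  stmt_17_general τ hτ μ F hF
end

section
/- If (c_n) is the moment sequence of a finite positive measure on [0,1] whose distribution function is concave (equivalently, the measure has a nonincreasing density on (0,1] plus a possible atom at 0), then the sequence ((n+1) c_n)_{n≥0} is completely monotone. -/
open MeasureTheory Set

theorem sub_mul_le_setIntegral_deriv_mul_of_antitoneOn {f f' w : ℝ → ℝ} {a b t₀ : ℝ}
    (ht₀ : t₀ ∈ Ioc a b) (hf : ∀ t ∈ Icc a b, HasDerivAt f (f' t) t)
    (hf' : IntervalIntegrable f' volume a b)
    (hpos : ∀ t ∈ Ioc a b, t < t₀ → 0 ≤ f' t) (hneg : ∀ t ∈ Ioc a b, t₀ < t → f' t ≤ 0)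
    (hw : AntitoneOn w (Ioc a b)) (hfw : IntegrableOn (fun t => f' t * w t) (Ioc a b)) :
    (f b - f a) * w t₀ ≤ ∫ t in Ioc a b, f' t * w t := by
  have hab : a ≤ b := ht₀.1.le.trans ht₀.2
  have hFTC : ∫ t in Ioc a b, f' t = f b - f a := by
    rw [← intervalIntegral.integral_of_le hab]
    exact intervalIntegral.integral_eq_sub_of_hasDerivAt (by rwa [uIcc_of_le hab]) hf'
  rw [← hFTC, ← integral_mul_const]
  refine setIntegral_mono_on ((hf'.1).mul_const _) hfw measurableSet_Ioc fun t ht => ?_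
  -- `f'` and `w t - w t₀` are both `≥ 0` before `t₀` and both `≤ 0` after it.
  rcases lt_trichotomy t t₀ with h | rfl | h
  · exact mul_le_mul_of_nonneg_left (hw ht ht₀ h.le) (hpos t ht h)
  · exact le_rfl
  · exact mul_le_mul_of_nonpos_left (hw ht₀ ht h.le) (hneg t ht h)

def diffKernel (j k : ℕ) (t : ℝ) : ℝ :=
  ∑ n ∈ Finset.range (k + 1), (-1 : ℝ) ^ n * k.choose n * ((n + j + 1) * t ^ (n + j))

theorem hasDerivAt_pow_succ_mul_one_sub_pow (j k : ℕ) (t : ℝ) :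
    HasDerivAt (fun s : ℝ => s ^ (j + 1) * (1 - s) ^ k) (diffKernel j k t) t := by
  have hexpand : (fun s : ℝ => s ^ (j + 1) * (1 - s) ^ k) =
      fun s => ∑ n ∈ Finset.range (k + 1), (-1 : ℝ) ^ n * k.choose n * s ^ (n + j + 1) := by
    funext s
    rw [sub_eq_neg_add, add_pow, Finset.mul_sum]
    refine Finset.sum_congr rfl fun n _ => ?_
    rw [neg_pow, one_pow]
    ring
  rw [hexpand]
  refine HasDerivAt.fun_sum fun n _ => ?_
  refine ((hasDerivAt_pow (n + j + 1) t).const_mul ((-1 : ℝ) ^ n * k.choose n)).congr_deriv ?_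
  rw [Nat.add_sub_cancel]
  push_cast
  ring

theorem diffKernel_succ_eq (j m : ℕ) (t : ℝ) :
    diffKernel j (m + 1) t = t ^ j * (1 - t) ^ m * ((j + 1) - (j + m + 2) * t) := by
  have hprod := (hasDerivAt_pow (j + 1) t).fun_mul (((hasDerivAt_id t).const_sub 1).pow (m + 1))
  refine (hasDerivAt_pow_succ_mul_one_sub_pow j (m + 1) t).unique (hprod.congr_deriv ?_)
  simp only [id, Pi.pow_apply, Nat.add_sub_cancel]
  push_cast
  ring

theorem diffKernel_zero (j : ℕ) (t : ℝ) : diffKernel j 0 t = (j + 1) * t ^ j := by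
  simp [diffKernel]

theorem diffKernel_nonneg {j k : ℕ} {t : ℝ} (ht : t ∈ Icc (0 : ℝ) 1)
    (h : t < (j + 1) / (j + k + 1)) : 0 ≤ diffKernel j k t := by
  obtain ⟨ht0, ht1⟩ := ht
  rcases k with _ | m
  · rw [diffKernel_zero]
    positivity
  · rw [diffKernel_succ_eq]
    rw [lt_div_iff₀ (by positivity)] at h
    have h1 : 0 ≤ 1 - t := by linarith
    have h2 : 0 ≤ (j + 1 : ℝ) - (j + m + 2) * t := by push_cast at h; linarith
    positivity

theorem diffKernel_nonpos {j k : ℕ} {t : ℝ} (ht : t ∈ Icc (0 : ℝ) 1)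
    (h : (j + 1) / (j + k + 1) < t) : diffKernel j k t ≤ 0 := by
  obtain ⟨ht0, ht1⟩ := ht
  rcases k with _ | m
  · simp only [CharP.cast_eq_zero, add_zero] at h
    rw [div_self (by positivity)] at h
    linarith
  · rw [diffKernel_succ_eq]
    rw [div_lt_iff₀ (by positivity)] at h
    have h1 : 0 ≤ 1 - t := by linarith
    have h2 : (j + 1 : ℝ) - (j + m + 2) * t ≤ 0 := by push_cast at h; linarith
    exact mul_nonpos_of_nonneg_of_nonpos (by positivity) h2

theorem continuous_diffKernel (j k : ℕ) : Continuous (diffKernel j k) := by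
  unfold diffKernel
  fun_prop

theorem setIntegral_diffKernel_mul {w : ℝ → ℝ} (hw : IntegrableOn w (Ioc 0 1)) (j k : ℕ) :
    ∫ t in Ioc 0 1, diffKernel j k t * w t = ∑ n ∈ Finset.range (k + 1),
      (-1 : ℝ) ^ n * k.choose n * ((n + j + 1) * ∫ t in Ioc 0 1, t ^ (n + j) * w t) := by
  have hmoment (m : ℕ) : IntegrableOn (fun t => t ^ m * w t) (Ioc 0 1) :=
    hw.continuousOn_mul_of_subset (continuous_pow m).continuousOn isCompact_Icc measurableSet_Ioc
      Ioc_subset_Icc_self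
  have hexpand : (fun t => diffKernel j k t * w t) = fun t =>
      ∑ n ∈ Finset.range (k + 1), (-1 : ℝ) ^ n * k.choose n * (n + j + 1) * (t ^ (n + j) * w t) := by
    funext t
    rw [diffKernel, Finset.sum_mul]
    exact Finset.sum_congr rfl fun n _ => by ring
  rw [hexpand, integral_finsetSum _ fun n _ => (hmoment (n + j)).const_mul _]
  refine Finset.sum_congr rfl fun n _ => ?_
  rw [integral_const_mul]
  ring

theorem setIntegral_diffKernel_mul_nonneg {w : ℝ → ℝ} (hw_anti : AntitoneOn w (Ioc 0 1))
    (hw_nonneg : ∀ t ∈ Ioc (0 : ℝ) 1, 0 ≤ w t) (hw_int : IntegrableOn w (Ioc 0 1)) (j k : ℕ) :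
    0 ≤ ∫ t in Ioc 0 1, diffKernel j k t * w t := by
  set t₀ : ℝ := (j + 1) / (j + k + 1)
  have ht₀ : t₀ ∈ Ioc 0 1 :=
    ⟨by positivity, (div_le_one (by positivity)).2 (by linarith [(k.cast_nonneg : (0 : ℝ) ≤ k)])⟩
  have key := sub_mul_le_setIntegral_deriv_mul_of_antitoneOn ht₀
    (fun t _ => hasDerivAt_pow_succ_mul_one_sub_pow j k t)
    ((continuous_diffKernel j k).intervalIntegrable 0 1)
    (fun t ht => diffKernel_nonneg (Ioc_subset_Icc_self ht))
    (fun t ht => diffKernel_nonpos (Ioc_subset_Icc_self ht)) hw_anti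
    (hw_int.continuousOn_mul_of_subset (continuous_diffKernel j k).continuousOn isCompact_Icc
      measurableSet_Ioc Ioc_subset_Icc_self)
  refine le_trans ?_ key
  have := hw_nonneg t₀ ht₀
  norm_num
  positivity

theorem stmt_18 (a₀ : ℝ) (ha₀ : 0 ≤ a₀) (w : ℝ → ℝ)
    (hw_anti : AntitoneOn w (Set.Ioc (0:ℝ) 1))
    (hw_nonneg : ∀ t ∈ Set.Ioc (0:ℝ) 1, 0 ≤ w t)
    (hw_int : MeasureTheory.IntegrableOn w (Set.Ioc (0:ℝ) 1))
    (c : ℕ → ℝ)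
    (hc : ∀ n, c n = (if n = 0 then a₀ else 0) + ∫ t in Set.Ioc (0:ℝ) 1, t ^ n * w t) :
    CompletelyMonotone (fun n => (n + 1 : ℝ) * c n) := by
  intro j k
  have hatom : 0 ≤ ∑ n ∈ Finset.range (k + 1),
      (-1 : ℝ) ^ n * k.choose n * ((n + j + 1) * if n + j = 0 then a₀ else 0) := by
    refine Finset.sum_nonneg fun n _ => ?_
    split_ifs with h
    · obtain ⟨rfl, rfl⟩ : n = 0 ∧ j = 0 := by omega
      simpa using ha₀
    · simp
  have hkernel := setIntegral_diffKernel_mul_nonneg hw_anti hw_nonneg hw_int j k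
  rw [setIntegral_diffKernel_mul hw_int] at hkernel
  calc 0 ≤ _ := add_nonneg hatom hkernel
    _ = _ := by
      rw [← Finset.sum_add_distrib]
      refine Finset.sum_congr rfl fun n _ => ?_
      simp only [hc]
      push_cast
      ring
end
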